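/- arXiv:1507.01230 — 5 statements merged into one kernel-verified Lean document; each statement's English description precedes it below -/
import Mathlib

section
/- Let X(·)ξ and X(·)η be two solutions of ẋ = A(t)x that are integrally separated, i.e. ‖X(t)ξ‖/‖X(s)ξ‖ ≥ K e^{α(t−s)} ‖X(t)η‖/‖X(s)η‖ for all t ≥ s ≥ 0 with constants K ≥ 1, α > 0. Then for every λ ≠ 0 and every μ ∈ ℝ, the Bohl spectrum of the solution X(·)(λξ + μη) equals Σ_ξ. -/
/-!
Write `w t = X t (c • ξ + μ • η)`. Integral separation from time `0` gives
`‖X t η‖ / ‖X t ξ‖ = O(e^{-α t})`, so `‖w t‖ / ‖X t ξ‖ → |c|` and `log ‖w t‖ - log ‖X t ξ‖`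
converges. If `w` never vanishes, this difference is continuous on `[0, ∞)`, hence bounded, and a
bounded difference of log-norms disappears from every Bohl quotient because `t n - s n → ∞`.

That `w` never vanishes does not follow from uniqueness for the ODE, as `A` need not be locally
bounded. Instead, if `w s = 0` then `w` has derivative `A s 0 = 0` at `s`, so `‖w t‖ = o(t - s)`.
But at time `s` the two summands `c • X s ξ` and `μ • X s η` have equal norms, and integral
separation makes the first outgrow the second by the factor `K e^{α (t - s)} ≥ 1 + α (t - s)`,
which forces `‖w t‖ ≥ α (t - s) |c| ‖X t ξ‖ / (K e^{α (t - s)})`.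
-/

open Filter Topology Set Bornology Real

/-- The Bohl spectrum of the solution `X (·) ξ`. -/
noncomputable def bohlSpec {d : ℕ} (X : ℝ → (Fin d → ℝ) →L[ℝ] (Fin d → ℝ))
    (ξ : Fin d → ℝ) : Set EReal :=
  {l | ∃ t s : ℕ → ℝ, (∀ n, 0 ≤ s n ∧ s n ≤ t n) ∧
    Filter.Tendsto (fun n => t n - s n) Filter.atTop Filter.atTop ∧
    Filter.Tendsto
      (fun n => (((t n - s n)⁻¹ * Real.log (‖X (t n) ξ‖ / ‖X (s n) ξ‖) : ℝ) : EReal))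
      Filter.atTop (nhds l)}

theorem tendsto_coe_ereal_of_sub_tendsto_zero {ι : Type*} {l : Filter ι} {x y : ι → ℝ}
    {a : EReal} (hx : Tendsto (fun i => (x i : EReal)) l (𝓝 a))
    (hxy : Tendsto (fun i => y i - x i) l (𝓝 0)) :
    Tendsto (fun i => (y i : EReal)) l (𝓝 a) := by
  have hdiff : Tendsto (fun i => ((y i - x i : ℝ) : EReal)) l (𝓝 0) :=
    (continuous_coe_real_ereal.tendsto 0).comp hxy
  have hadd := (EReal.continuousAt_add (p := (a, 0)) (Or.inr EReal.zero_ne_bot)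
    (Or.inr EReal.zero_ne_top)).tendsto.comp (hx.prodMk_nhds hdiff)
  rw [add_zero] at hadd
  refine hadd.congr fun i => ?_
  simp only [Function.comp_apply, ← EReal.coe_add, add_sub_cancel]

theorem ContinuousOn.isBounded_image_Ici_of_tendsto {β : Type*} [PseudoMetricSpace β]
    {f : ℝ → β} {a : ℝ} {L : β} (hf : ContinuousOn f (Ici a))
    (hlim : Tendsto f atTop (𝓝 L)) : IsBounded (f '' Ici a) := by
  obtain ⟨S, hS, hbdd⟩ := Metric.exists_isBounded_image_of_tendsto hlim
  obtain ⟨T, hT⟩ := mem_atTop_sets.1 hS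
  have hcover : Ici a ⊆ Icc a T ∪ S := fun t ht =>
    (le_total t T).imp (fun htT => ⟨ht, htT⟩) (hT t)
  refine (IsBounded.union ?_ (hbdd.subset (image_mono subset_rfl))).subset
    ((image_mono hcover).trans (image_union f _ _).subset)
  exact (isCompact_Icc.image_of_continuousOn (hf.mono Icc_subset_Ici_self)).isBounded

theorem tendsto_norm_smul_add_div_norm {ι 𝕜 E : Type*} [NormedField 𝕜] [NormedAddCommGroup E]
    [NormedSpace 𝕜 E] {l : Filter ι} {x y : ι → E} (c μ : 𝕜) (hx : ∀ᶠ i in l, x i ≠ 0)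
    (hyx : Tendsto (fun i => ‖y i‖ / ‖x i‖) l (𝓝 0)) :
    Tendsto (fun i => ‖c • x i + μ • y i‖ / ‖x i‖) l (𝓝 ‖c‖) := by
  rw [tendsto_iff_norm_sub_tendsto_zero]
  refine squeeze_zero' (Eventually.of_forall fun i => norm_nonneg _) ?_
    (by simpa using hyx.const_mul ‖μ‖)
  filter_upwards [hx] with i hi
  have hxi := norm_pos_iff.2 hi
  have hsub : ‖c • x i + μ • y i‖ / ‖x i‖ - ‖c‖ = (‖c • x i + μ • y i‖ - ‖c • x i‖) / ‖x i‖ := by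
    rw [norm_smul]
    field_simp
  rw [hsub, Real.norm_eq_abs, abs_div, abs_of_pos hxi, ← mul_div_assoc, ← norm_smul]
  gcongr
  simpa using abs_norm_sub_norm_le (c • x i + μ • y i) (c • x i)

section IntegralSeparation

variable {E : Type*} [NormedAddCommGroup E] {u v : ℝ → E} {K α : ℝ}

def IntegrallySeparated (u v : ℝ → E) (K α : ℝ) : Prop :=
  ∀ s t : ℝ, 0 ≤ s → s ≤ t → K * exp (α * (t - s)) * (‖v t‖ / ‖v s‖) ≤ ‖u t‖ / ‖u s‖

theorem IntegrallySeparated.tendsto_norm_div_norm (h : IntegrallySeparated u v K α)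
    (hK : 0 < K) (hα : 0 < α) (hu : u 0 ≠ 0) (hv : v 0 ≠ 0) :
    Tendsto (fun t => ‖v t‖ / ‖u t‖) atTop (𝓝 0) := by
  have hdecay : Tendsto (fun t => ‖v 0‖ / (K * ‖u 0‖) * exp (-(α * t))) atTop (𝓝 0) := by
    simpa using (tendsto_exp_neg_atTop_nhds_zero.comp
      (tendsto_id.const_mul_atTop hα)).const_mul (‖v 0‖ / (K * ‖u 0‖))
  refine squeeze_zero' (Eventually.of_forall fun t => by positivity) ?_ hdecay
  filter_upwards [eventually_ge_atTop 0] with t ht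
  have hsep := h 0 t le_rfl ht
  have hu0 := norm_pos_iff.2 hu
  have hv0 := norm_pos_iff.2 hv
  refine div_le_of_le_mul₀ (norm_nonneg _) (by positivity) ?_
  rw [sub_zero, mul_div_assoc', div_le_div_iff₀ hv0 hu0] at hsep
  rw [exp_neg]
  have hexp := exp_pos (α * t)
  field_simp
  nlinarith

variable [NormedSpace ℝ E]

theorem IntegrallySeparated.le_norm_smul_add_of_eq_zero (h : IntegrallySeparated u v K α)
    (hK : 1 ≤ K) {s t c μ : ℝ} (hs : 0 ≤ s) (hst : s ≤ t) (hus : u s ≠ 0) (hvs : v s ≠ 0)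
    (hws : c • u s + μ • v s = 0) :
    α * (t - s) * (|c| * ‖u t‖) ≤ K * exp (α * (t - s)) * ‖c • u t + μ • v t‖ := by
  set e := exp (α * (t - s))
  have hq := norm_pos_iff.2 hus
  have hb := norm_pos_iff.2 hvs
  have heq_s : |c| * ‖u s‖ = |μ| * ‖v s‖ := by
    rw [← Real.norm_eq_abs, ← Real.norm_eq_abs, ← norm_smul, ← norm_smul,
      eq_neg_of_add_eq_zero_left hws, norm_neg]
  have hle_t : |c| * ‖u t‖ ≤ |μ| * ‖v t‖ + ‖c • u t + μ • v t‖ := by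
    have := norm_sub_le (c • u t + μ • v t) (μ • v t)
    rw [add_sub_cancel_right, norm_smul, norm_smul, Real.norm_eq_abs, Real.norm_eq_abs] at this
    linarith
  have hsep := h s t hs hst
  rw [mul_div_assoc', div_le_div_iff₀ hb hq] at hsep
  have hgrowth : α * (t - s) ≤ K * e - 1 := by
    nlinarith [add_one_le_exp (α * (t - s)), exp_pos (α * (t - s))]
  have key : K * e * (|c| * ‖u t‖ - ‖c • u t + μ • v t‖) * ‖u s‖ ≤ |c| * ‖u t‖ * ‖u s‖ :=
    calc _ ≤ K * e * (|μ| * ‖v t‖) * ‖u s‖ := by gcongr; linarith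
      _ = |μ| * (K * e * ‖v t‖ * ‖u s‖) := by ring
      _ ≤ |μ| * (‖u t‖ * ‖v s‖) := by gcongr
      _ = |c| * ‖u t‖ * ‖u s‖ := by linear_combination (-‖u t‖) * heq_s
  have hcancel : (K * e - 1) * (|c| * ‖u t‖) ≤ K * e * ‖c • u t + μ • v t‖ :=
    le_of_mul_le_mul_right (by linarith) hq
  calc _ ≤ (K * e - 1) * (|c| * ‖u t‖) := by gcongr
    _ ≤ _ := hcancel

theorem IntegrallySeparated.not_hasDerivWithinAt_zero (h : IntegrallySeparated u v K α)
    (hK : 1 ≤ K) (hα : 0 < α) {s c μ : ℝ} (hs : 0 ≤ s) (hc : c ≠ 0)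
    (hu : ContinuousWithinAt u (Ioi s) s) (hus : u s ≠ 0) (hvs : v s ≠ 0)
    (hws : c • u s + μ • v s = 0) :
    ¬ HasDerivWithinAt (fun t => c • u t + μ • v t) 0 (Ioi s) s := by
  intro hw
  have hslope : Tendsto (fun t => ‖c • u t + μ • v t‖ / (t - s)) (𝓝[>] s) (𝓝 0) := by
    have := ((hasDerivWithinAt_iff_tendsto_slope' (lt_irrefl s)).1 hw).norm
    rw [norm_zero] at this
    refine this.congr' (eventually_nhdsWithin_of_forall fun t (hst : s < t) => ?_)
    rw [slope_def_module, hws, sub_zero, norm_smul, norm_inv, Real.norm_eq_abs,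
      abs_of_pos (sub_pos.2 hst), inv_mul_eq_div]
  have hlhs : Tendsto (fun t => α * (|c| * ‖u t‖)) (𝓝[>] s) (𝓝 (α * (|c| * ‖u s‖))) :=
    (hu.norm.const_mul _).const_mul _
  have hrhs : Tendsto (fun t => K * exp (α * (t - s)) * (‖c • u t + μ • v t‖ / (t - s)))
      (𝓝[>] s) (𝓝 (K * exp (α * (s - s)) * 0)) :=
    (((by fun_prop : Continuous fun t => K * exp (α * (t - s))).tendsto s).mono_left
      nhdsWithin_le_nhds).mul hslope
  have hle : ∀ᶠ t in 𝓝[>] s,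
      α * (|c| * ‖u t‖) ≤ K * exp (α * (t - s)) * (‖c • u t + μ • v t‖ / (t - s)) :=
    eventually_nhdsWithin_of_forall fun t (hst : s < t) => by
      have := h.le_norm_smul_add_of_eq_zero hK hs hst.le hus hvs hws
      rw [mul_div_assoc', le_div_iff₀ (sub_pos.2 hst)]
      linarith
  have hlimit := le_of_tendsto_of_tendsto hlhs hrhs hle
  rw [mul_zero] at hlimit
  have : 0 < α * (|c| * ‖u s‖) := by
    have := norm_pos_iff.2 hus
    have := abs_pos.2 hc
    positivity
  linarith

end IntegralSeparation

theorem bohlSpec_subset_of_abs_log_norm_sub_le {d : ℕ} {X : ℝ → (Fin d → ℝ) →L[ℝ] (Fin d → ℝ)}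
    {u v : Fin d → ℝ} {B : ℝ} (hu : ∀ t, 0 ≤ t → X t u ≠ 0) (hv : ∀ t, 0 ≤ t → X t v ≠ 0)
    (hB : ∀ t, 0 ≤ t → |log ‖X t u‖ - log ‖X t v‖| ≤ B) :
    bohlSpec X v ⊆ bohlSpec X u := by
  rintro l ⟨t, s, hts, hgap, hv_lim⟩
  refine ⟨t, s, hts, hgap, tendsto_coe_ereal_of_sub_tendsto_zero hv_lim ?_⟩
  have hinv : Tendsto (fun n => (t n - s n)⁻¹ * (2 * B)) atTop (𝓝 0) := by
    simpa using hgap.inv_tendsto_atTop.mul_const (2 * B)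
  refine squeeze_zero_norm (fun n => ?_) hinv
  obtain ⟨hs, hst⟩ := hts n
  have ht : 0 ≤ t n := hs.trans hst
  have hsplit : log (‖X (t n) u‖ / ‖X (s n) u‖) - log (‖X (t n) v‖ / ‖X (s n) v‖) =
      (log ‖X (t n) u‖ - log ‖X (t n) v‖) - (log ‖X (s n) u‖ - log ‖X (s n) v‖) := by
    rw [log_div (norm_ne_zero_iff.2 (hu _ ht)) (norm_ne_zero_iff.2 (hu _ hs)),
      log_div (norm_ne_zero_iff.2 (hv _ ht)) (norm_ne_zero_iff.2 (hv _ hs))]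
    ring
  rw [← mul_sub, hsplit, norm_mul, norm_inv, Real.norm_eq_abs, Real.norm_eq_abs,
    abs_of_nonneg (sub_nonneg.2 hst)]
  gcongr
  calc _ ≤ |log ‖X (t n) u‖ - log ‖X (t n) v‖| + |log ‖X (s n) u‖ - log ‖X (s n) v‖| :=
        abs_sub _ _
    _ ≤ 2 * B := by linarith [hB _ ht, hB _ hs]

theorem bohlSpec_eq_of_abs_log_norm_sub_le {d : ℕ} {X : ℝ → (Fin d → ℝ) →L[ℝ] (Fin d → ℝ)}
    {u v : Fin d → ℝ} {B : ℝ} (hu : ∀ t, 0 ≤ t → X t u ≠ 0) (hv : ∀ t, 0 ≤ t → X t v ≠ 0)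
    (hB : ∀ t, 0 ≤ t → |log ‖X t u‖ - log ‖X t v‖| ≤ B) :
    bohlSpec X u = bohlSpec X v :=
  (bohlSpec_subset_of_abs_log_norm_sub_le hv hu fun t ht => by
    rw [abs_sub_comm]; exact hB t ht).antisymm
    (bohlSpec_subset_of_abs_log_norm_sub_le hu hv hB)

theorem bohl_stmt8_general {d : ℕ}
    (A : ℝ → (Fin d → ℝ) →L[ℝ] (Fin d → ℝ))
    (X : ℝ → (Fin d → ℝ) →L[ℝ] (Fin d → ℝ))
    (hX : ∀ (ξ : Fin d → ℝ) (t : ℝ), 0 ≤ t →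
      HasDerivAt (fun τ => X τ ξ) (A t (X t ξ)) t)
    (ξ η : Fin d → ℝ)
    (hne : ∀ t : ℝ, 0 ≤ t → X t ξ ≠ 0 ∧ X t η ≠ 0)
    (K α : ℝ) (hK : 1 ≤ K) (hα : 0 < α)
    (hsep : ∀ s t : ℝ, 0 ≤ s → s ≤ t →
      K * Real.exp (α * (t - s)) * (‖X t η‖ / ‖X s η‖) ≤ ‖X t ξ‖ / ‖X s ξ‖) :
    ∀ (c : ℝ), c ≠ 0 → ∀ μ : ℝ,
      bohlSpec X (c • ξ + μ • η) = bohlSpec X ξ := by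
  intro c hc μ
  have hsep' : IntegrallySeparated (fun t => X t ξ) (fun t => X t η) K α := hsep
  have hcont (w : Fin d → ℝ) : ContinuousOn (fun t => X t w) (Ici 0) :=
    fun t ht => (hX w t ht).continuousAt.continuousWithinAt
  have hζ : ∀ t, 0 ≤ t → X t (c • ξ + μ • η) ≠ 0 := by
    intro s hs h0
    have hws : c • X s ξ + μ • X s η = 0 := by simpa using h0
    refine hsep'.not_hasDerivWithinAt_zero hK hα hs hc
      (hX ξ s hs).continuousAt.continuousWithinAt (hne s hs).1 (hne s hs).2 hws ?_
    simpa [h0] using (hX (c • ξ + μ • η) s hs).hasDerivWithinAt (s := Ioi s)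
  have hratio : Tendsto (fun t => ‖X t (c • ξ + μ • η)‖ / ‖X t ξ‖) atTop (𝓝 ‖c‖) := by
    simpa using tendsto_norm_smul_add_div_norm c μ
      (eventually_ge_atTop 0 |>.mono fun t ht => (hne t ht).1)
      (hsep'.tendsto_norm_div_norm (by linarith) hα (hne 0 le_rfl).1 (hne 0 le_rfl).2)
  have hlog : Tendsto (fun t => log ‖X t (c • ξ + μ • η)‖ - log ‖X t ξ‖) atTop
      (𝓝 (log ‖c‖)) :=
    ((continuousAt_log (norm_ne_zero_iff.2 hc)).tendsto.comp hratio).congr' <|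
      eventually_ge_atTop 0 |>.mono fun t ht =>
        log_div (norm_ne_zero_iff.2 (hζ t ht)) (norm_ne_zero_iff.2 (hne t ht).1)
  have hbdd := ContinuousOn.isBounded_image_Ici_of_tendsto
    (((hcont _).norm.log fun t ht => norm_ne_zero_iff.2 (hζ t ht)).sub
      ((hcont ξ).norm.log fun t ht => norm_ne_zero_iff.2 (hne t ht).1)) hlog
  obtain ⟨B, hB⟩ := isBounded_iff_forall_norm_le.1 hbdd
  exact bohlSpec_eq_of_abs_log_norm_sub_le hζ (fun t ht => (hne t ht).1)
    fun t ht => hB _ ⟨t, ht, rfl⟩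

/-- if the solutions `X (·) ξ` and `X (·) η` are integrally separated, i.e.
`‖X t ξ‖ / ‖X s ξ‖ ≥ K e^{α (t-s)} ‖X t η‖ / ‖X s η‖` for all `t ≥ s ≥ 0` with `K ≥ 1`,
`α > 0`, then for every `c ≠ 0` and every `μ`, the Bohl spectrum of `X (·) (c ξ + μ η)`
equals `Σ_ξ`. -/
theorem bohl_stmt8 {d : ℕ}
    (A : ℝ → (Fin d → ℝ) →L[ℝ] (Fin d → ℝ))
    (X : ℝ → (Fin d → ℝ) →L[ℝ] (Fin d → ℝ))
    (hX0 : X 0 = 1)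
    (hX : ∀ (ξ : Fin d → ℝ) (t : ℝ), 0 ≤ t →
      HasDerivAt (fun τ => X τ ξ) (A t (X t ξ)) t)
    (ξ η : Fin d → ℝ) (hξ : ξ ≠ 0) (hη : η ≠ 0)
    (hne : ∀ t : ℝ, 0 ≤ t → X t ξ ≠ 0 ∧ X t η ≠ 0)
    (K α : ℝ) (hK : 1 ≤ K) (hα : 0 < α)
    (hsep : ∀ s t : ℝ, 0 ≤ s → s ≤ t →
      K * Real.exp (α * (t - s)) * (‖X t η‖ / ‖X s η‖) ≤ ‖X t ξ‖ / ‖X s ξ‖) :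
    ∀ (c : ℝ), c ≠ 0 → ∀ μ : ℝ,
      bohlSpec X (c • ξ + μ • η) = bohlSpec X ξ :=
  bohl_stmt8_general A X hX ξ η hne K α hK hα hsep
end

section
/- The Bohl spectrum of ẋ = A(t)x is contained in its Sacker–Sell (exponential dichotomy) spectrum: if the system admits an exponential dichotomy with growth rate λ, then λ is not in the Bohl spectrum of any nonzero solution. -/
open Filter Topology

/-- An exponential dichotomy (on the half line) with growth rate `γ` for the system with
fundamental operator solution `X` and its inverse `Xinv`. -/
def ExpDichotomy {d : ℕ} (X Xinv : ℝ → (Fin d → ℝ) →L[ℝ] (Fin d → ℝ)) (γ : ℝ) : Prop :=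
  ∃ P : (Fin d → ℝ) →L[ℝ] (Fin d → ℝ), P ∘L P = P ∧
    ∃ K α : ℝ, 1 ≤ K ∧ 0 < α ∧
      (∀ s t : ℝ, 0 ≤ s → s ≤ t →
        ‖X t ∘L P ∘L Xinv s‖ ≤ K * Real.exp ((γ - α) * (t - s))) ∧
      (∀ t s : ℝ, 0 ≤ t → t ≤ s →
        ‖X t ∘L (1 - P) ∘L Xinv s‖ ≤ K * Real.exp ((γ + α) * (t - s)))

/-!
If `ξ` lies in the range of the dichotomy projector `P`, the solution `X t ξ` decays relative to
`X s ξ` at rate `γ - α`. Otherwise its unstable component `(1 - P) ξ` is nonzero; that component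
grows at rate at least `γ + α` and, at every time, dominates the stable component up to a fixed
factor, so the whole solution grows at rate at least `γ + α` over long intervals. Either way the
logarithmic growth rates over intervals of length tending to infinity stay a distance `α` away
from `γ`.
-/

open Real

lemma tendsto_inv_mul_log_mul_exp {ι : Type*} {l : Filter ι} {D c : ι → ℝ} {c₀ β : ℝ}
    (hD : Tendsto D l atTop) (hc : Tendsto c l (𝓝 c₀)) (hc₀ : 0 < c₀) :
    Tendsto (fun n => (D n)⁻¹ * log (c n * exp (β * D n))) l (𝓝 β) := by
  have h : Tendsto (fun n => (D n)⁻¹ * log (c n) + β) l (𝓝 (0 * log c₀ + β)) :=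
    ((tendsto_inv_atTop_zero.comp hD).mul (hc.log hc₀.ne')).add_const β
  rw [zero_mul, zero_add] at h
  refine h.congr' ?_
  filter_upwards [hD.eventually_gt_atTop 0, hc.eventually_const_lt hc₀] with n hDn hcn
  rw [log_mul hcn.ne' (exp_pos _).ne', log_exp]
  field_simp

lemma le_of_tendsto_inv_mul_log_of_le_mul_exp {ι : Type*} {l : Filter ι} [l.NeBot]
    {D a c : ι → ℝ} {c₀ β L : ℝ} (hD : Tendsto D l atTop) (hc : Tendsto c l (𝓝 c₀))
    (hc₀ : 0 < c₀) (ha : ∀ᶠ n in l, 0 < a n ∧ a n ≤ c n * exp (β * D n))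
    (hL : Tendsto (fun n => (D n)⁻¹ * log (a n)) l (𝓝 L)) : L ≤ β := by
  refine le_of_tendsto_of_tendsto hL (tendsto_inv_mul_log_mul_exp hD hc hc₀) ?_
  filter_upwards [ha, hD.eventually_ge_atTop 0] with n ⟨han, hac⟩ hDn
  exact mul_le_mul_of_nonneg_left (log_le_log han hac) (inv_nonneg.2 hDn)

lemma le_of_tendsto_inv_mul_log_of_mul_exp_le {ι : Type*} {l : Filter ι} [l.NeBot]
    {D a c : ι → ℝ} {c₀ β L : ℝ} (hD : Tendsto D l atTop) (hc : Tendsto c l (𝓝 c₀))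
    (hc₀ : 0 < c₀) (ha : ∀ᶠ n in l, c n * exp (β * D n) ≤ a n)
    (hL : Tendsto (fun n => (D n)⁻¹ * log (a n)) l (𝓝 L)) : β ≤ L := by
  refine le_of_tendsto_of_tendsto (tendsto_inv_mul_log_mul_exp hD hc hc₀) hL ?_
  filter_upwards [ha, hD.eventually_ge_atTop 0, hc.eventually_const_lt hc₀] with n hac hDn hcn
  exact mul_le_mul_of_nonneg_left (log_le_log (by positivity) hac) (inv_nonneg.2 hDn)

section BohlSpectrum

variable {d : ℕ} {X : ℝ → (Fin d → ℝ) →L[ℝ] (Fin d → ℝ)} {ξ : Fin d → ℝ} {c : ℝ → ℝ}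
  {c₀ β L : ℝ}

lemma le_of_coe_mem_bohlSpec (hpos : ∀ u, 0 ≤ u → 0 < ‖X u ξ‖)
    (hc : Tendsto c atTop (𝓝 c₀)) (hc₀ : 0 < c₀)
    (hbound : ∀ s t, 0 ≤ s → s ≤ t → ‖X t ξ‖ ≤ c (t - s) * exp (β * (t - s)) * ‖X s ξ‖)
    (hL : (L : EReal) ∈ bohlSpec X ξ) : L ≤ β := by
  obtain ⟨t, s, hst, hD, hlim⟩ := hL
  refine le_of_tendsto_inv_mul_log_of_le_mul_exp hD (hc.comp hD) hc₀
    (Eventually.of_forall fun n => ?_) (EReal.tendsto_coe.mp hlim)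
  obtain ⟨hs, hst⟩ := hst n
  have hXs := hpos _ hs
  exact ⟨div_pos (hpos _ (hs.trans hst)) hXs, (div_le_iff₀ hXs).2 (hbound _ _ hs hst)⟩

lemma ge_of_coe_mem_bohlSpec (hpos : ∀ u, 0 ≤ u → 0 < ‖X u ξ‖)
    (hc : Tendsto c atTop (𝓝 c₀)) (hc₀ : 0 < c₀)
    (hbound : ∀ s t, 0 ≤ s → s ≤ t → c (t - s) * exp (β * (t - s)) * ‖X s ξ‖ ≤ ‖X t ξ‖)
    (hL : (L : EReal) ∈ bohlSpec X ξ) : β ≤ L := by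
  obtain ⟨t, s, hst, hD, hlim⟩ := hL
  refine le_of_tendsto_inv_mul_log_of_mul_exp_le hD (hc.comp hD) hc₀
    (Eventually.of_forall fun n => ?_) (EReal.tendsto_coe.mp hlim)
  obtain ⟨hs, hst⟩ := hst n
  exact (le_div_iff₀ (hpos _ hs)).2 (hbound _ _ hs hst)

end BohlSpectrum

lemma norm_apply_pos_of_comp_eq_one {E F : Type*} [NormedAddCommGroup E] [NormedSpace ℝ E]
    [NormedAddCommGroup F] [NormedSpace ℝ F] {L : E →L[ℝ] F} {R : F →L[ℝ] E}
    (h : R ∘L L = 1) {v : E} (hv : v ≠ 0) : 0 < ‖L v‖ := by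
  refine norm_pos_iff.2 fun hLv => hv ?_
  simpa [hLv] using (congrArg (· v) h).symm

lemma norm_apply_le_of_comp_eq_one {E F G : Type*} [NormedAddCommGroup E] [NormedSpace ℝ E]
    [NormedAddCommGroup F] [NormedSpace ℝ F] [NormedAddCommGroup G] [NormedSpace ℝ G]
    {L : E →L[ℝ] F} {R : F →L[ℝ] E} (h : R ∘L L = 1) (A : E →L[ℝ] G) (T : E →L[ℝ] E)
    (v : E) : ‖A (T v)‖ ≤ ‖A ∘L T ∘L R‖ * ‖L v‖ := by
  have hv : (A ∘L T ∘L R) (L v) = A (T v) := by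
    simpa using congrArg (fun S => A (T (S v))) h
  exact hv ▸ (A ∘L T ∘L R).le_opNorm (L v)

structure ExpDichotomyBounds {E : Type*} [NormedAddCommGroup E] [NormedSpace ℝ E]
    (X : ℝ → E →L[ℝ] E) (P : E →L[ℝ] E) (K α γ : ℝ) : Prop where
  isIdempotentElem : IsIdempotentElem P
  K_pos : 0 < K
  α_pos : 0 < α
  stable : ∀ v s t, 0 ≤ s → s ≤ t → ‖X t (P v)‖ ≤ K * exp ((γ - α) * (t - s)) * ‖X s v‖
  unstable : ∀ v t s, 0 ≤ t → t ≤ s →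
    ‖X t ((1 - P) v)‖ ≤ K * exp ((γ + α) * (t - s)) * ‖X s v‖

lemma ExpDichotomy.exists_bounds {d : ℕ} {X Xinv : ℝ → (Fin d → ℝ) →L[ℝ] (Fin d → ℝ)} {γ : ℝ}
    (hED : ExpDichotomy X Xinv γ) (hinv : ∀ t, 0 ≤ t → Xinv t ∘L X t = 1) :
    ∃ P K α, ExpDichotomyBounds X P K α γ := by
  obtain ⟨P, hP, K, α, hK, hα, hstable, hunstable⟩ := hED
  refine ⟨P, K, α, hP, one_pos.trans_le hK, hα, fun v s t hs hst => ?_, fun v t s ht hts => ?_⟩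
  · exact (norm_apply_le_of_comp_eq_one (hinv s hs) _ _ v).trans
      (mul_le_mul_of_nonneg_right (hstable s t hs hst) (norm_nonneg _))
  · exact (norm_apply_le_of_comp_eq_one (hinv s (ht.trans hts)) _ _ v).trans
      (mul_le_mul_of_nonneg_right (hunstable t s ht hts) (norm_nonneg _))

namespace ExpDichotomyBounds

variable {E : Type*} [NormedAddCommGroup E] [NormedSpace ℝ E] {X : ℝ → E →L[ℝ] E}
  {P : E →L[ℝ] E} {K α γ : ℝ}

lemma inv_mul_exp_mul_le_norm_unstable (hB : ExpDichotomyBounds X P K α γ) (v : E) {s t : ℝ}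
    (hs : 0 ≤ s) (hst : s ≤ t) :
    K⁻¹ * exp ((γ + α) * (t - s)) * ‖X s ((1 - P) v)‖ ≤ ‖X t ((1 - P) v)‖ := by
  have hQ : (1 - P) ((1 - P) v) = (1 - P) v := congrArg (· v) hB.isIdempotentElem.one_sub
  have h := hB.unstable ((1 - P) v) s t hs hst
  rw [hQ] at h
  have hK := hB.K_pos
  calc K⁻¹ * exp ((γ + α) * (t - s)) * ‖X s ((1 - P) v)‖
      ≤ K⁻¹ * exp ((γ + α) * (t - s)) * (K * exp ((γ + α) * (s - t)) * ‖X t ((1 - P) v)‖) := by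
        gcongr
    _ = ‖X t ((1 - P) v)‖ := by
        rw [show (γ + α) * (s - t) = -((γ + α) * (t - s)) by ring, exp_neg]
        field_simp

lemma exists_norm_stable_le_mul_norm_unstable (hB : ExpDichotomyBounds X P K α γ) {ξ : E}
    (hQξ : 0 < ‖X 0 ((1 - P) ξ)‖) :
    ∃ C, 0 ≤ C ∧ ∀ u, 0 ≤ u → ‖X u (P ξ)‖ ≤ C * ‖X u ((1 - P) ξ)‖ := by
  have hK := hB.K_pos
  refine ⟨K ^ 2 * ‖X 0 ξ‖ / ‖X 0 ((1 - P) ξ)‖, by positivity, fun u hu => ?_⟩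
  have hP := hB.stable ξ 0 u le_rfl hu
  have hQ := hB.inv_mul_exp_mul_le_norm_unstable ξ le_rfl hu
  have hexp : exp ((γ - α) * u) ≤ exp ((γ + α) * u) := exp_le_exp.2 (by nlinarith [hB.α_pos])
  rw [sub_zero] at hP hQ
  rw [div_mul_eq_mul_div, le_div_iff₀ hQξ]
  calc ‖X u (P ξ)‖ * ‖X 0 ((1 - P) ξ)‖
      ≤ K * exp ((γ + α) * u) * ‖X 0 ξ‖ * ‖X 0 ((1 - P) ξ)‖ := by
        gcongr; exact hP.trans (by gcongr)
    _ = K ^ 2 * ‖X 0 ξ‖ * (K⁻¹ * exp ((γ + α) * u) * ‖X 0 ((1 - P) ξ)‖) := by field_simp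
    _ ≤ K ^ 2 * ‖X 0 ξ‖ * ‖X u ((1 - P) ξ)‖ := by gcongr

lemma exists_mul_exp_mul_le_norm (hB : ExpDichotomyBounds X P K α γ) {ξ : E}
    (hQξ : 0 < ‖X 0 ((1 - P) ξ)‖) :
    ∃ c : ℝ → ℝ, ∃ c₀, 0 < c₀ ∧ Tendsto c atTop (𝓝 c₀) ∧
      ∀ s t, 0 ≤ s → s ≤ t → c (t - s) * exp ((γ + α) * (t - s)) * ‖X s ξ‖ ≤ ‖X t ξ‖ := by
  obtain ⟨C, hC, hdom⟩ := hB.exists_norm_stable_le_mul_norm_unstable hQξ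
  have hK := hB.K_pos
  -- `‖X t ξ‖ ≥ ‖X t ((1 - P) ξ)‖ - ‖X t (P ξ)‖`, with `‖X s ξ‖ ≤ (1 + C) * ‖X s ((1 - P) ξ)‖`
  -- feeding the growing term and `‖X s ξ‖` the decaying one.
  refine ⟨fun D => K⁻¹ / (1 + C) - K * exp (-(2 * α * D)), K⁻¹ / (1 + C), by positivity, ?_, ?_⟩
  · have h : Tendsto (fun D => exp (-(2 * α * D))) atTop (𝓝 0) :=
      tendsto_exp_atBot.comp (tendsto_neg_atTop_atBot.comp
        (tendsto_id.const_mul_atTop (by linarith [hB.α_pos])))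
    simpa using (h.const_mul K).const_sub (K⁻¹ / (1 + C))
  intro s t hs hst
  have hsplit : ∀ u, X u ξ = X u (P ξ) + X u ((1 - P) ξ) := fun u => by
    rw [← map_add]; simp
  have hXs : ‖X s ξ‖ ≤ (1 + C) * ‖X s ((1 - P) ξ)‖ := by
    rw [hsplit s]
    linarith [norm_add_le (X s (P ξ)) (X s ((1 - P) ξ)), hdom s hs]
  have hXt : ‖X t ((1 - P) ξ)‖ ≤ ‖X t ξ‖ + ‖X t (P ξ)‖ := by
    rw [hsplit t]
    exact norm_le_add_norm_add' _ _
  have hexp : exp ((γ - α) * (t - s)) = exp (-(2 * α * (t - s))) * exp ((γ + α) * (t - s)) := by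
    rw [← exp_add]; ring_nf
  calc (K⁻¹ / (1 + C) - K * exp (-(2 * α * (t - s)))) * exp ((γ + α) * (t - s)) * ‖X s ξ‖
      = K⁻¹ * exp ((γ + α) * (t - s)) * (‖X s ξ‖ / (1 + C))
        - K * exp ((γ - α) * (t - s)) * ‖X s ξ‖ := by rw [hexp]; ring
    _ ≤ K⁻¹ * exp ((γ + α) * (t - s)) * ‖X s ((1 - P) ξ)‖ - ‖X t (P ξ)‖ := by
        gcongr
        · exact (div_le_iff₀' (by positivity)).2 hXs
        · exact hB.stable ξ s t hs hst
    _ ≤ ‖X t ξ‖ := by linarith [hB.inv_mul_exp_mul_le_norm_unstable ξ hs hst]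

end ExpDichotomyBounds

theorem bohl_stmt9_general {d : ℕ}
    (X Xinv : ℝ → (Fin d → ℝ) →L[ℝ] (Fin d → ℝ))
    (hXinv : ∀ t : ℝ, 0 ≤ t → X t ∘L Xinv t = 1 ∧ Xinv t ∘L X t = 1)
    (γ : ℝ) (hED : ExpDichotomy X Xinv γ) :
    ∀ ξ : Fin d → ℝ, ξ ≠ 0 → ((γ : ℝ) : EReal) ∉ bohlSpec X ξ := by
  intro ξ hξ hγ
  have hpos : ∀ u, 0 ≤ u → ∀ {v}, v ≠ 0 → 0 < ‖X u v‖ := fun u hu _ hv =>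
    norm_apply_pos_of_comp_eq_one (hXinv u hu).2 hv
  obtain ⟨P, K, α, hB⟩ := hED.exists_bounds fun t ht => (hXinv t ht).2
  by_cases hQξ : (1 - P) ξ = 0
  · have hPξ : P ξ = ξ := (sub_eq_zero.1 (by simpa using hQξ)).symm
    have := le_of_coe_mem_bohlSpec (hpos · · hξ) tendsto_const_nhds hB.K_pos
      (fun s t hs hst => by simpa [hPξ] using hB.stable ξ s t hs hst) hγ
    linarith [hB.α_pos]
  · obtain ⟨c, c₀, hc₀, hc, hgrowth⟩ := hB.exists_mul_exp_mul_le_norm (hpos 0 le_rfl hQξ)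
    have := ge_of_coe_mem_bohlSpec (hpos · · hξ) hc hc₀ hgrowth hγ
    linarith [hB.α_pos]

/-- the Bohl spectrum is contained in the Sacker–Sell spectrum: if the system
admits an exponential dichotomy with growth rate `γ`, then `γ` is not in the Bohl spectrum of
any nonzero solution. -/
theorem bohl_stmt9 {d : ℕ}
    (A : ℝ → (Fin d → ℝ) →L[ℝ] (Fin d → ℝ))
    (X Xinv : ℝ → (Fin d → ℝ) →L[ℝ] (Fin d → ℝ))
    (hX0 : X 0 = 1)
    (hX : ∀ (ξ : Fin d → ℝ) (t : ℝ), 0 ≤ t →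
      HasDerivAt (fun τ => X τ ξ) (A t (X t ξ)) t)
    (hXinv : ∀ t : ℝ, 0 ≤ t → X t ∘L Xinv t = 1 ∧ Xinv t ∘L X t = 1)
    (γ : ℝ) (hED : ExpDichotomy X Xinv γ) :
    ∀ ξ : Fin d → ℝ, ξ ≠ 0 → ((γ : ℝ) : EReal) ∉ bohlSpec X ξ :=
  bohl_stmt9_general X Xinv hXinv γ hED
end

section
/- For the scalar equation ẋ = a(t)x with a(t) = n on [2n, 2n+1] and a(t) = −2n−1 on [2n+1, 2n+2] for n ∈ ℕ₀, one has lim_{t−s→∞} (1/(t−s)) ∫_s^t a(u) du = −∞. -/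
open Filter Topology

/-- The filter describing `t - s → ∞` with `0 ≤ s ≤ t`, for pairs `p = (s, t)`. -/
def bohlFilter : Filter (ℝ × ℝ) :=
  (Filter.atTop.comap fun p : ℝ × ℝ => p.2 - p.1) ⊓
    Filter.principal {p : ℝ × ℝ | 0 ≤ p.1 ∧ p.1 ≤ p.2}

/-!
On `[2n, 2n + 2]` the coefficient gains `n` and then loses `2n + 1`, so the primitive
`F t = ∫₀ᵗ a` satisfies `F (2n) = -n(n + 1)/2`, and between grid points
`-t²/8 - 3t/4 - 1 ≤ F t ≤ -t²/8 + 3t/4`. Hence for `0 ≤ s ≤ t`,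
`F t - F s ≤ -(t + s)((t - s)/8 - 3/4) + 1`, whose average over `[s, t]` is at most
`-(t - s)/8 + 2` once `t - s ≥ 6`.
-/

theorem intervalIntegral_eq_mul_of_eqOn_Ioo {f : ℝ → ℝ} {x y c : ℝ} (hxy : x ≤ y)
    (hf : Set.EqOn f (fun _ => c) (Set.Ioo x y)) :
    ∫ u in x..y, f u = c * (y - x) := by
  rw [intervalIntegral.integral_congr_Ioo_of_le hxy hf, intervalIntegral.integral_const,
    smul_eq_mul, mul_comm]

structure IsBohlCoefficient (a : ℝ → ℝ) : Prop where
  intervalIntegrable : ∀ s t : ℝ, IntervalIntegrable a MeasureTheory.volume s t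
  eq_of_rising : ∀ n : ℕ, ∀ t : ℝ, (2 * n : ℝ) ≤ t → t < 2 * n + 1 → a t = n
  eq_of_falling :
    ∀ n : ℕ, ∀ t : ℝ, (2 * n + 1 : ℝ) ≤ t → t < 2 * n + 2 → a t = -(2 * n + 1)

namespace IsBohlCoefficient

variable {a : ℝ → ℝ}

theorem integral_rising (ha : IsBohlCoefficient a) (n : ℕ) (t : ℝ)
    (h₁ : 2 * n ≤ t) (h₂ : t ≤ 2 * n + 1) :
    ∫ u in (2 * n : ℝ)..t, a u = n * (t - 2 * n) :=
  intervalIntegral_eq_mul_of_eqOn_Ioo h₁ fun _ hu =>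
    ha.eq_of_rising n _ hu.1.le (hu.2.trans_le h₂)

theorem integral_falling (ha : IsBohlCoefficient a) (n : ℕ) (t : ℝ)
    (h₁ : 2 * n + 1 ≤ t) (h₂ : t ≤ 2 * n + 2) :
    ∫ u in (2 * n + 1 : ℝ)..t, a u = -(2 * n + 1) * (t - (2 * n + 1)) :=
  intervalIntegral_eq_mul_of_eqOn_Ioo h₁ fun _ hu =>
    ha.eq_of_falling n _ hu.1.le (hu.2.trans_le h₂)

theorem integral_add_adjacent (ha : IsBohlCoefficient a) (y : ℝ) {x z : ℝ} :
    (∫ u in x..y, a u) + ∫ u in y..z, a u = ∫ u in x..z, a u :=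
  intervalIntegral.integral_add_adjacent_intervals (ha.intervalIntegrable x y)
    (ha.intervalIntegrable y z)

theorem integral_zero_two_mul (ha : IsBohlCoefficient a) (m : ℕ) :
    ∫ u in (0 : ℝ)..2 * m, a u = -(m * (m + 1)) / 2 := by
  induction m with
  | zero => simp
  | succ m ih =>
    have hcast : (2 * (m + 1 : ℕ) : ℝ) = 2 * m + 2 := by push_cast; ring
    rw [hcast, ← ha.integral_add_adjacent (2 * m + 1), ← ha.integral_add_adjacent (2 * m), ih,
      ha.integral_rising m (2 * m + 1) (by linarith) le_rfl,
      ha.integral_falling m (2 * m + 2) (by linarith) le_rfl]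
    push_cast
    ring

theorem integral_zero_mem_Icc (ha : IsBohlCoefficient a) {t : ℝ} (ht : 0 ≤ t) :
    ∫ u in (0 : ℝ)..t, a u ∈
      Set.Icc (-t ^ 2 / 8 - 3 * t / 4 - 1) (-t ^ 2 / 8 + 3 * t / 4) := by
  set n := ⌊t / 2⌋₊
  have hn : (n : ℝ) ≤ t / 2 := Nat.floor_le (by positivity)
  have hn' : t / 2 < n + 1 := Nat.lt_floor_add_one _
  have hn0 : (0 : ℝ) ≤ n := n.cast_nonneg
  rw [← ha.integral_add_adjacent (2 * n), integral_zero_two_mul ha]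
  rcases le_or_gt t (2 * n + 1) with hrise | hfall
  · rw [ha.integral_rising n t (by linarith) hrise]
    constructor <;> nlinarith
  · rw [← ha.integral_add_adjacent (2 * n + 1),
      ha.integral_rising n (2 * n + 1) (by linarith) le_rfl,
      ha.integral_falling n t hfall.le (by linarith)]
    constructor <;> nlinarith

theorem integral_le (ha : IsBohlCoefficient a) {s t : ℝ} (hs : 0 ≤ s) (hst : s ≤ t) :
    ∫ u in s..t, a u ≤ -(t + s) * ((t - s) / 8 - 3 / 4) + 1 := by
  have hsplit := ha.integral_add_adjacent s (x := 0) (z := t)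
  have hF_t := (integral_zero_mem_Icc ha (hs.trans hst)).2
  have hF_s := (integral_zero_mem_Icc ha hs).1
  linarith

theorem average_integral_le (ha : IsBohlCoefficient a) {s t : ℝ} (hs : 0 ≤ s)
    (hst : 6 ≤ t - s) :
    (t - s)⁻¹ * ∫ u in s..t, a u ≤ -((t - s) / 8) + 2 := by
  have hpos : 0 < t - s := by linarith
  calc (t - s)⁻¹ * ∫ u in s..t, a u
      ≤ (t - s)⁻¹ * (-(t - s) * ((t - s) / 8 - 3 / 4) + 1) := by
        gcongr
        refine (integral_le ha hs (by linarith)).trans ?_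
        nlinarith
    _ = -((t - s) / 8) + 3 / 4 + (t - s)⁻¹ := by field_simp; ring
    _ ≤ -((t - s) / 8) + 2 := by
        have : (t - s)⁻¹ ≤ 1 := inv_le_one_of_one_le₀ (by linarith)
        linarith

end IsBohlCoefficient

/-- for the scalar equation `ẋ = a(t)x` with `a(t) = n` on `[2n, 2n+1)` and
`a(t) = -(2n+1)` on `[2n+1, 2n+2)` for `n ∈ ℕ`, the averages `(t-s)⁻¹ ∫_s^t a` tend to `-∞`
as `t - s → ∞` (with `0 ≤ s ≤ t`). -/
theorem bohl_stmt11 (a : ℝ → ℝ)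
    (hInt : ∀ s t : ℝ, IntervalIntegrable a MeasureTheory.volume s t)
    (ha1 : ∀ n : ℕ, ∀ t : ℝ, (2 * n : ℝ) ≤ t → t < 2 * n + 1 → a t = n)
    (ha2 : ∀ n : ℕ, ∀ t : ℝ, (2 * n + 1 : ℝ) ≤ t → t < 2 * n + 2 → a t = -(2 * n + 1)) :
    Filter.Tendsto (fun p : ℝ × ℝ => (p.2 - p.1)⁻¹ * ∫ u in p.1..p.2, a u)
      bohlFilter Filter.atBot := by
  have ha : IsBohlCoefficient a := ⟨hInt, ha1, ha2⟩
  have hlen : Tendsto (fun p : ℝ × ℝ => p.2 - p.1) bohlFilter atTop :=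
    tendsto_comap.mono_left inf_le_left
  have hbound : ∀ᶠ p : ℝ × ℝ in bohlFilter,
      (p.2 - p.1)⁻¹ * (∫ u in p.1..p.2, a u) ≤ -((p.2 - p.1) / 8) + 2 := by
    filter_upwards [hlen.eventually_ge_atTop 6, mem_inf_of_right (mem_principal_self _)]
      with p hp hmem
    exact ha.average_integral_le hmem.1 hp
  refine tendsto_atBot_mono' _ hbound (tendsto_atBot_add_const_right _ 2 ?_)
  exact tendsto_neg_atTop_atBot.comp (hlen.atTop_div_const (by norm_num))
end

section
/- Let x(t), y(t) be solutions of ẋ = A(t)x whose angle is bounded below by a positive number (i.e. 1 − ⟨x(t)/‖x(t)‖, y(t)/‖y(t)‖⟩² ≥ δ > 0). Then for all nonzero α, β, the solutions t ↦ αx(t) + βy(t) all have the same Bohl spectrum. -/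
open Filter Topology
open scoped RealInnerProductSpace

/-!
If the angle between `x t` and `y t` stays bounded away from zero, then `‖α • x t + β • y t‖²` is
comparable, with constants independent of `t`, to `α² ‖x t‖² + β² ‖y t‖²`. Hence for nonzero
coefficients any two such combinations have norms within a bounded ratio of each other, their
log-norms differ by a bounded function of `t`, and that difference disappears from the Bohl
quotients after dividing by `t n - s n → ∞`.
-/

/-- The Bohl spectrum of a (nowhere vanishing) solution `z` of a linear system: the set of
all limits of `(t n - s n)⁻¹ * log (‖z (t n)‖ / ‖z (s n)‖)` along sequences with
`0 ≤ s n ≤ t n` and `t n - s n → ∞`. -/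
noncomputable def bohlSpecSol {d : ℕ} (z : ℝ → EuclideanSpace ℝ (Fin d)) : Set EReal :=
  {l | ∃ t s : ℕ → ℝ, (∀ n, 0 ≤ s n ∧ s n ≤ t n) ∧
    Filter.Tendsto (fun n => t n - s n) Filter.atTop Filter.atTop ∧
    Filter.Tendsto
      (fun n => (((t n - s n)⁻¹ * Real.log (‖z (t n)‖ / ‖z (s n)‖) : ℝ) : EReal))
      Filter.atTop (nhds l)}

section AngleBound

variable {E : Type*} [NormedAddCommGroup E] [InnerProductSpace ℝ E]

lemma inner_sq_le_of_le_one_sub_inner_sq {u v : E} {δ : ℝ}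
    (h : δ ≤ 1 - ⟪‖u‖⁻¹ • u, ‖v‖⁻¹ • v⟫ ^ 2) :
    ⟪u, v⟫ ^ 2 ≤ (1 - δ) * (‖u‖ ^ 2 * ‖v‖ ^ 2) := by
  rcases eq_or_ne u 0 with rfl | hu
  · simp
  rcases eq_or_ne v 0 with rfl | hv
  · simp
  rw [real_inner_smul_left, real_inner_smul_right] at h
  have hnorm : ⟪u, v⟫ ^ 2 = ‖u‖ ^ 2 * ‖v‖ ^ 2 * (‖u‖⁻¹ * (‖v‖⁻¹ * ⟪u, v⟫)) ^ 2 := by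
    field_simp
  rw [hnorm, mul_comm (1 - δ)]
  exact mul_le_mul_of_nonneg_left (by linarith) (by positivity)

lemma norm_smul_add_smul_sq (u v : E) (α β : ℝ) :
    ‖α • u + β • v‖ ^ 2 = α ^ 2 * ‖u‖ ^ 2 + 2 * (α * β * ⟪u, v⟫) + β ^ 2 * ‖v‖ ^ 2 := by
  rw [norm_add_sq_real, real_inner_smul_left, real_inner_smul_right, norm_smul, norm_smul,
    mul_pow, mul_pow, Real.norm_eq_abs, Real.norm_eq_abs, sq_abs, sq_abs]
  ring

lemma norm_smul_add_smul_sq_le (u v : E) (α β : ℝ) :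
    ‖α • u + β • v‖ ^ 2 ≤ 2 * (α ^ 2 * ‖u‖ ^ 2 + β ^ 2 * ‖v‖ ^ 2) := by
  calc ‖α • u + β • v‖ ^ 2 ≤ (‖α • u‖ + ‖β • v‖) ^ 2 := by gcongr; exact norm_add_le _ _
    _ ≤ 2 * (‖α • u‖ ^ 2 + ‖β • v‖ ^ 2) := add_sq_le
    _ = 2 * (α ^ 2 * ‖u‖ ^ 2 + β ^ 2 * ‖v‖ ^ 2) := by
      rw [norm_smul, norm_smul, mul_pow, mul_pow, Real.norm_eq_abs, Real.norm_eq_abs, sq_abs,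
        sq_abs]

lemma le_norm_smul_add_smul_sq {u v : E} {δ : ℝ} (hδ : δ ≤ 1)
    (h : ⟪u, v⟫ ^ 2 ≤ (1 - δ) * (‖u‖ ^ 2 * ‖v‖ ^ 2)) (α β : ℝ) :
    δ / 2 * (α ^ 2 * ‖u‖ ^ 2 + β ^ 2 * ‖v‖ ^ 2) ≤ ‖α • u + β • v‖ ^ 2 := by
  set a := α * ‖u‖
  set b := β * ‖v‖
  set c := α * β * ⟪u, v⟫
  have hc : c ^ 2 ≤ (1 - δ) * (a * b) ^ 2 := by
    calc c ^ 2 = (α * β) ^ 2 * ⟪u, v⟫ ^ 2 := by ring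
      _ ≤ (α * β) ^ 2 * ((1 - δ) * (‖u‖ ^ 2 * ‖v‖ ^ 2)) := by gcongr
      _ = (1 - δ) * (a * b) ^ 2 := by ring
  have hcross : |2 * c| ≤ (1 - δ / 2) * (a ^ 2 + b ^ 2) := by
    refine abs_le_of_sq_le_sq ?_ (mul_nonneg (by linarith) (by positivity))
    calc (2 * c) ^ 2 ≤ 4 * (1 - δ) * (a * b) ^ 2 := by linarith
      _ ≤ 4 * (1 - δ / 2) ^ 2 * (a * b) ^ 2 := by gcongr; nlinarith [sq_nonneg δ]
      _ ≤ ((1 - δ / 2) * (a ^ 2 + b ^ 2)) ^ 2 := by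
        nlinarith [mul_nonneg (sq_nonneg (1 - δ / 2)) (sq_nonneg (a ^ 2 - b ^ 2))]
  rw [norm_smul_add_smul_sq]
  nlinarith [neg_abs_le (2 * c)]

lemma smul_add_smul_ne_zero {u v : E} {δ : ℝ} (hδ : 0 < δ) (hδ1 : δ ≤ 1)
    (h : ⟪u, v⟫ ^ 2 ≤ (1 - δ) * (‖u‖ ^ 2 * ‖v‖ ^ 2)) (hu : u ≠ 0) {α : ℝ} (hα : α ≠ 0)
    (β : ℝ) : α • u + β • v ≠ 0 := by
  have hpos : 0 < δ / 2 * (α ^ 2 * ‖u‖ ^ 2 + β ^ 2 * ‖v‖ ^ 2) := by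
    have : 0 < ‖u‖ := norm_pos_iff.mpr hu
    positivity
  intro h0
  simpa [h0] using hpos.trans_le (le_norm_smul_add_smul_sq hδ1 h α β)

lemma norm_smul_add_smul_sq_le_mul {u v : E} {δ : ℝ} (hδ : 0 < δ) (hδ1 : δ ≤ 1)
    (h : ⟪u, v⟫ ^ 2 ≤ (1 - δ) * (‖u‖ ^ 2 * ‖v‖ ^ 2)) {α β : ℝ} (hα : α ≠ 0) (hβ : β ≠ 0)
    (α' β' : ℝ) :
    ‖α' • u + β' • v‖ ^ 2 ≤ 4 * max ((α' / α) ^ 2) ((β' / β) ^ 2) / δ * ‖α • u + β • v‖ ^ 2 := by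
  set K := max ((α' / α) ^ 2) ((β' / β) ^ 2)
  have hweights :
      α' ^ 2 * ‖u‖ ^ 2 + β' ^ 2 * ‖v‖ ^ 2 ≤ K * (α ^ 2 * ‖u‖ ^ 2 + β ^ 2 * ‖v‖ ^ 2) := by
    calc α' ^ 2 * ‖u‖ ^ 2 + β' ^ 2 * ‖v‖ ^ 2
        = (α' / α) ^ 2 * (α ^ 2 * ‖u‖ ^ 2) + (β' / β) ^ 2 * (β ^ 2 * ‖v‖ ^ 2) := by
          field_simp
      _ ≤ K * (α ^ 2 * ‖u‖ ^ 2) + K * (β ^ 2 * ‖v‖ ^ 2) := by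
          gcongr
          exacts [le_max_left _ _, le_max_right _ _]
      _ = K * (α ^ 2 * ‖u‖ ^ 2 + β ^ 2 * ‖v‖ ^ 2) := by ring
  calc ‖α' • u + β' • v‖ ^ 2 ≤ 2 * (α' ^ 2 * ‖u‖ ^ 2 + β' ^ 2 * ‖v‖ ^ 2) :=
        norm_smul_add_smul_sq_le u v α' β'
    _ ≤ 4 * K / δ * (δ / 2 * (α ^ 2 * ‖u‖ ^ 2 + β ^ 2 * ‖v‖ ^ 2)) := by
        rw [show 4 * K / δ * (δ / 2 * _) = 2 * (K * (α ^ 2 * ‖u‖ ^ 2 + β ^ 2 * ‖v‖ ^ 2)) by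
          field_simp; ring]
        gcongr
    _ ≤ 4 * K / δ * ‖α • u + β • v‖ ^ 2 := by
        gcongr
        exact le_norm_smul_add_smul_sq hδ1 h α β

end AngleBound

lemma Real.abs_log_sub_log_le_of_le_mul {p q M M' : ℝ} (hp : 0 < p) (hq : 0 < q)
    (h : p ≤ M * q) (h' : q ≤ M' * p) : |log p - log q| ≤ max (log M) (log M') := by
  have hM : 0 < M := pos_of_mul_pos_left (hp.trans_le h) hq.le
  have hM' : 0 < M' := pos_of_mul_pos_left (hq.trans_le h') hp.le
  have hup : log p ≤ log M + log q := by
    rw [← log_mul hM.ne' hq.ne']; exact log_le_log hp h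
  have hlow : log q ≤ log M' + log p := by
    rw [← log_mul hM'.ne' hp.ne']; exact log_le_log hq h'
  rw [abs_le]
  constructor <;> linarith [le_max_left (log M) (log M'), le_max_right (log M) (log M')]

lemma Real.abs_log_sub_log_le_of_sq_le_mul {p q M M' : ℝ} (hp : 0 < p) (hq : 0 < q)
    (h : p ^ 2 ≤ M * q ^ 2) (h' : q ^ 2 ≤ M' * p ^ 2) :
    |log p - log q| ≤ max (log M) (log M') / 2 := by
  have := abs_log_sub_log_le_of_le_mul (pow_pos hp 2) (pow_pos hq 2) h h'
  rw [log_pow, log_pow, ← mul_sub, abs_mul, Nat.cast_ofNat, abs_two] at this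
  linarith

lemma EReal.tendsto_coe_add_of_tendsto_zero {ι : Type*} {f : Filter ι} {a e : ι → ℝ} {L : EReal}
    (ha : Tendsto (fun i => (a i : EReal)) f (𝓝 L)) (he : Tendsto e f (𝓝 0)) :
    Tendsto (fun i => ((a i + e i : ℝ) : EReal)) f (𝓝 L) := by
  have hadd : ContinuousAt (fun p : EReal × EReal => p.1 + p.2) (L, 0) :=
    EReal.continuousAt_add (Or.inr EReal.zero_ne_bot) (Or.inr EReal.zero_ne_top)
  simpa [Function.comp_def] using hadd.tendsto.comp (ha.prodMk_nhds (EReal.tendsto_coe.mpr he))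

section BohlSpectrum

variable {d : ℕ} {z z' : ℝ → EuclideanSpace ℝ (Fin d)}

theorem bohlSpecSol_subset_of_abs_log_sub_le (hz : ∀ t, 0 ≤ t → z t ≠ 0)
    (hz' : ∀ t, 0 ≤ t → z' t ≠ 0) {C : ℝ}
    (hC : ∀ t, 0 ≤ t → |Real.log ‖z' t‖ - Real.log ‖z t‖| ≤ C) :
    bohlSpecSol z ⊆ bohlSpecSol z' := by
  rintro l ⟨t, s, hst, hgap, hlim⟩
  refine ⟨t, s, hst, hgap, ?_⟩
  set g : ℝ → ℝ := fun u => Real.log ‖z' u‖ - Real.log ‖z u‖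
  have hs : ∀ n, 0 ≤ s n := fun n => (hst n).1
  have ht : ∀ n, 0 ≤ t n := fun n => (hs n).trans (hst n).2
  have hsplit : ∀ n, (t n - s n)⁻¹ * Real.log (‖z' (t n)‖ / ‖z' (s n)‖) =
      (t n - s n)⁻¹ * Real.log (‖z (t n)‖ / ‖z (s n)‖) +
        (t n - s n)⁻¹ * (g (t n) - g (s n)) := by
    intro n
    rw [Real.log_div (norm_ne_zero_iff.mpr (hz' _ (ht n))) (norm_ne_zero_iff.mpr (hz' _ (hs n))),
      Real.log_div (norm_ne_zero_iff.mpr (hz _ (ht n))) (norm_ne_zero_iff.mpr (hz _ (hs n)))]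
    ring
  have herr : Tendsto (fun n => (t n - s n)⁻¹ * (g (t n) - g (s n))) atTop (𝓝 0) := by
    refine (tendsto_inv_atTop_zero.comp hgap).zero_mul_isBoundedUnder_le
      (isBoundedUnder_of ⟨2 * C, fun n => ?_⟩)
    calc ‖g (t n) - g (s n)‖ ≤ |g (t n)| + |g (s n)| := abs_sub _ _
      _ ≤ 2 * C := by linarith [hC _ (ht n), hC _ (hs n)]
  simpa only [hsplit] using EReal.tendsto_coe_add_of_tendsto_zero hlim herr

theorem bohlSpecSol_eq_of_abs_log_sub_le (hz : ∀ t, 0 ≤ t → z t ≠ 0)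
    (hz' : ∀ t, 0 ≤ t → z' t ≠ 0) {C : ℝ}
    (hC : ∀ t, 0 ≤ t → |Real.log ‖z' t‖ - Real.log ‖z t‖| ≤ C) :
    bohlSpecSol z = bohlSpecSol z' :=
  (bohlSpecSol_subset_of_abs_log_sub_le hz hz' hC).antisymm
    (bohlSpecSol_subset_of_abs_log_sub_le hz' hz fun t ht =>
      abs_sub_comm (Real.log ‖z t‖) _ ▸ hC t ht)

end BohlSpectrum

theorem bohl_stmt13_general {d : ℕ}
    (x y : ℝ → EuclideanSpace ℝ (Fin d))
    (hx0 : ∀ t : ℝ, 0 ≤ t → x t ≠ 0)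
    (δ : ℝ) (hδ : 0 < δ)
    (hangle : ∀ t : ℝ, 0 ≤ t →
      δ ≤ 1 - ⟪(‖x t‖⁻¹ : ℝ) • x t, (‖y t‖⁻¹ : ℝ) • y t⟫ ^ 2) :
    ∀ α β α' β' : ℝ, α ≠ 0 → β ≠ 0 → α' ≠ 0 → β' ≠ 0 →
      bohlSpecSol (fun t => α • x t + β • y t) =
        bohlSpecSol (fun t => α' • x t + β' • y t) := by
  intro α β α' β' hα hβ hα' hβ'
  have hδ1 : δ ≤ 1 := (hangle 0 le_rfl).trans (sub_le_self _ (sq_nonneg _))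
  have hinner t (ht : 0 ≤ t) := inner_sq_le_of_le_one_sub_inner_sq (hangle t ht)
  have hne {a : ℝ} (ha : a ≠ 0) (b : ℝ) t (ht : 0 ≤ t) : a • x t + b • y t ≠ 0 :=
    smul_add_smul_ne_zero hδ hδ1 (hinner t ht) (hx0 t ht) ha b
  exact bohlSpecSol_eq_of_abs_log_sub_le (hne hα β) (hne hα' β') fun t ht =>
    Real.abs_log_sub_log_le_of_sq_le_mul (norm_pos_iff.mpr (hne hα' β' t ht))
    (norm_pos_iff.mpr (hne hα β t ht))
    (norm_smul_add_smul_sq_le_mul hδ hδ1 (hinner t ht) hα hβ α' β')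
    (norm_smul_add_smul_sq_le_mul hδ hδ1 (hinner t ht) hα' hβ' α β)

/-- if `x, y` are solutions of `ẋ = A(t)x` whose angle is bounded below by a
positive number (`1 - ⟪x t/‖x t‖, y t/‖y t‖⟫² ≥ δ > 0`), then for all nonzero `α, β` the
solutions `t ↦ α x t + β y t` all have the same Bohl spectrum. -/
theorem bohl_stmt13 {d : ℕ}
    (A : ℝ → EuclideanSpace ℝ (Fin d) →L[ℝ] EuclideanSpace ℝ (Fin d))
    (x y : ℝ → EuclideanSpace ℝ (Fin d))
    (hx : ∀ t : ℝ, 0 ≤ t → HasDerivAt x (A t (x t)) t)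
    (hy : ∀ t : ℝ, 0 ≤ t → HasDerivAt y (A t (y t)) t)
    (hx0 : ∀ t : ℝ, 0 ≤ t → x t ≠ 0)
    (hy0 : ∀ t : ℝ, 0 ≤ t → y t ≠ 0)
    (δ : ℝ) (hδ : 0 < δ)
    (hangle : ∀ t : ℝ, 0 ≤ t →
      δ ≤ 1 - ⟪(‖x t‖⁻¹ : ℝ) • x t, (‖y t‖⁻¹ : ℝ) • y t⟫ ^ 2) :
    ∀ α β α' β' : ℝ, α ≠ 0 → β ≠ 0 → α' ≠ 0 → β' ≠ 0 →
      bohlSpecSol (fun t => α • x t + β • y t) =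
        bohlSpecSol (fun t => α' • x t + β' • y t) :=
  bohl_stmt13_general x y hx0 δ hδ hangle
end

section
/- For the scalar equation ẏ = a(t)y where a : [0,∞) → [−1, 0] satisfies (1/(T_{2k}−T_{2k−1})) ∫_{T_{2k−1}}^{T_{2k}} a → 0 and (1/(T_{2k+1}−T_{2k})) ∫_{T_{2k}}^{T_{2k+1}} a → −1, the Sacker–Sell spectrum equals the full interval [−1, 0]. -/
open Filter Topology

/-- A scalar exponential dichotomy with growth rate `γ` for the scalar equation whose
(positive) fundamental solution is `φ`: either the solution is pseudo-stable (projector `1`)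
or pseudo-unstable (projector `0`) at rate `γ`. -/
def ScalarExpDichotomy (φ : ℝ → ℝ) (γ : ℝ) : Prop :=
  ∃ K α : ℝ, 1 ≤ K ∧ 0 < α ∧
    ((∀ s t : ℝ, 0 ≤ s → s ≤ t → φ t ≤ K * Real.exp ((γ - α) * (t - s)) * φ s) ∨
     (∀ t s : ℝ, 0 ≤ t → t ≤ s → φ t ≤ K * Real.exp ((γ + α) * (t - s)) * φ s))

/-!
With `φ = exp ∘ Φ`, `Φ t = ∫₀ᵗ a`, a dichotomy at rate `γ` says that the increments of `Φ` over
`[s, t] ⊆ [0, ∞)` are bounded above by `C + (γ - α)(t - s)` or below by `-C + (γ + α)(t - s)`.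
Since `-1 ≤ a ≤ 0`, the first bound holds for every `γ > 0` and the second for every `γ < -1`.
Conversely, for `-1 ≤ γ ≤ 0` the first bound fails along the long intervals `[T (2k-1), T (2k)]`,
where `Φ` has average slope tending to `0`, and the second along `[T (2k), T (2k+1)]`, where the
average slope tends to `-1`.
-/

open Real

theorem scalarExpDichotomy_exp_iff {Φ : ℝ → ℝ} {γ : ℝ} :
    ScalarExpDichotomy (fun t => exp (Φ t)) γ ↔
      ∃ C α : ℝ, 0 ≤ C ∧ 0 < α ∧
        ((∀ s t, 0 ≤ s → s ≤ t → Φ t - Φ s ≤ C + (γ - α) * (t - s)) ∨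
         (∀ s t, 0 ≤ s → s ≤ t → -C + (γ + α) * (t - s) ≤ Φ t - Φ s)) := by
  have key : ∀ x y z C : ℝ, exp x ≤ exp C * exp y * exp z ↔ x - z ≤ C + y := by
    intro x y z C
    rw [← exp_add, ← exp_add, exp_le_exp]
    constructor <;> intro <;> linarith
  constructor
  · rintro ⟨K, α, hK, hα, h⟩
    rw [← exp_log (by linarith : 0 < K)] at h
    simp only [key] at h
    refine ⟨log K, α, log_nonneg hK, hα, h.imp id fun h s t hs hst => ?_⟩
    linarith [h s t hs hst]
  · rintro ⟨C, α, hC, hα, h⟩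
    refine ⟨exp C, α, one_le_exp hC, hα, ?_⟩
    simp only [key]
    exact h.imp id fun h t s ht hts => by linarith [h t s ht hts]

section

variable {Φ : ℝ → ℝ} {β γ : ℝ}

theorem scalarExpDichotomy_of_increment_le (hβγ : β < γ)
    (h : ∀ s t, 0 ≤ s → s ≤ t → Φ t - Φ s ≤ β * (t - s)) :
    ScalarExpDichotomy (fun t => exp (Φ t)) γ :=
  scalarExpDichotomy_exp_iff.2 ⟨0, γ - β, le_rfl, sub_pos.2 hβγ,
    Or.inl fun s t hs hst => by linarith [h s t hs hst]⟩

theorem scalarExpDichotomy_of_le_increment (hγβ : γ < β)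
    (h : ∀ s t, 0 ≤ s → s ≤ t → β * (t - s) ≤ Φ t - Φ s) :
    ScalarExpDichotomy (fun t => exp (Φ t)) γ :=
  scalarExpDichotomy_exp_iff.2 ⟨0, β - γ, le_rfl, sub_pos.2 hγβ,
    Or.inr fun s t hs hst => by linarith [h s t hs hst]⟩

end

section

variable {ι : Type*} {l : Filter ι} [l.NeBot] {x L : ι → ℝ} {C β c : ℝ}

theorem le_of_tendsto_inv_mul_of_le_add_mul (hL : Tendsto L l atTop)
    (hx : Tendsto (fun i => (L i)⁻¹ * x i) l (𝓝 c)) (hle : ∀ᶠ i in l, x i ≤ C + β * L i) :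
    c ≤ β := by
  have hbound : Tendsto (fun i => (L i)⁻¹ * C + β) l (𝓝 β) := by
    simpa using ((tendsto_inv_atTop_zero.comp hL).mul_const C).add_const β
  refine le_of_tendsto_of_tendsto hx hbound ?_
  filter_upwards [hL.eventually_gt_atTop 0, hle] with i hLi hi
  calc (L i)⁻¹ * x i ≤ (L i)⁻¹ * (C + β * L i) := by gcongr
    _ = (L i)⁻¹ * C + β := by field_simp

theorem le_of_tendsto_inv_mul_of_add_mul_le (hL : Tendsto L l atTop)
    (hx : Tendsto (fun i => (L i)⁻¹ * x i) l (𝓝 c)) (hle : ∀ᶠ i in l, C + β * L i ≤ x i) :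
    β ≤ c := by
  have := le_of_tendsto_inv_mul_of_le_add_mul (x := -x) (C := -C) (β := -β) hL
    (by simpa only [Pi.neg_apply, mul_neg] using hx.neg)
    (hle.mono fun i hi => by simp only [Pi.neg_apply]; linarith)
  linarith

end

def HasLongIntervalAverage (Φ : ℝ → ℝ) (c : ℝ) : Prop :=
  ∃ s t : ℕ → ℝ, (∀ k, 0 ≤ s k) ∧ Tendsto (fun k => t k - s k) atTop atTop ∧
    Tendsto (fun k => (t k - s k)⁻¹ * (Φ (t k) - Φ (s k))) atTop (𝓝 c)

namespace HasLongIntervalAverage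

variable {Φ : ℝ → ℝ} {c C β : ℝ}

theorem le_of_increment_le (h : HasLongIntervalAverage Φ c)
    (hb : ∀ s t, 0 ≤ s → s ≤ t → Φ t - Φ s ≤ C + β * (t - s)) : c ≤ β := by
  obtain ⟨s, t, hs, hL, havg⟩ := h
  refine le_of_tendsto_inv_mul_of_le_add_mul (C := C) hL havg ?_
  filter_upwards [hL.eventually_ge_atTop 0] with k hk
  exact hb _ _ (hs k) (sub_nonneg.1 hk)

theorem le_of_le_increment (h : HasLongIntervalAverage Φ c)
    (hb : ∀ s t, 0 ≤ s → s ≤ t → C + β * (t - s) ≤ Φ t - Φ s) : β ≤ c := by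
  obtain ⟨s, t, hs, hL, havg⟩ := h
  refine le_of_tendsto_inv_mul_of_add_mul_le (C := C) hL havg ?_
  filter_upwards [hL.eventually_ge_atTop 0] with k hk
  exact hb _ _ (hs k) (sub_nonneg.1 hk)

theorem not_scalarExpDichotomy {c₀ c₁ γ : ℝ} (h₀ : HasLongIntervalAverage Φ c₀)
    (h₁ : HasLongIntervalAverage Φ c₁) (hγ₁ : c₁ ≤ γ) (hγ₀ : γ ≤ c₀) :
    ¬ ScalarExpDichotomy (fun t => exp (Φ t)) γ := by
  rw [scalarExpDichotomy_exp_iff]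
  rintro ⟨C, α, -, hα, hstable | hunstable⟩
  · linarith [h₀.le_of_increment_le hstable]
  · linarith [h₁.le_of_le_increment hunstable]

end HasLongIntervalAverage

theorem intervalIntegral_mem_Icc_of_mem_Icc {a : ℝ → ℝ} {m M s t : ℝ} (hst : s ≤ t)
    (ha : IntervalIntegrable a MeasureTheory.volume s t)
    (hb : ∀ u ∈ Set.Icc s t, a u ∈ Set.Icc m M) :
    ∫ u in s..t, a u ∈ Set.Icc (m * (t - s)) (M * (t - s)) := by
  constructor
  · simpa [mul_comm] using
      intervalIntegral.integral_mono_on hst intervalIntegrable_const ha fun u hu => (hb u hu).1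
  · simpa [mul_comm] using
      intervalIntegral.integral_mono_on hst ha intervalIntegrable_const fun u hu => (hb u hu).2

/-- for the scalar equation `ẏ = a(t)y` with `-1 ≤ a ≤ 0`, an increasing
sequence `T` with `T (k+1) - T k → ∞` such that the averages of `a` over
`[T (2k-1), T (2k)]` tend to `0` and over `[T (2k), T (2k+1)]` tend to `-1`, the
Sacker–Sell spectrum equals the full interval `[-1, 0]`. -/
theorem bohl_stmt16 (a : ℝ → ℝ)
    (hInt : ∀ s t : ℝ, IntervalIntegrable a MeasureTheory.volume s t)
    (hbd : ∀ t : ℝ, 0 ≤ t → a t ∈ Set.Icc (-1 : ℝ) 0)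
    (T : ℕ → ℝ) (hT0 : T 0 = 0) (hTmono : StrictMono T)
    (hTdiff : Filter.Tendsto (fun k => T (k + 1) - T k) Filter.atTop Filter.atTop)
    (havg0 : Filter.Tendsto
      (fun k => (T (2 * k) - T (2 * k - 1))⁻¹ * ∫ u in (T (2 * k - 1))..(T (2 * k)), a u)
      Filter.atTop (nhds 0))
    (havg1 : Filter.Tendsto
      (fun k => (T (2 * k + 1) - T (2 * k))⁻¹ * ∫ u in (T (2 * k))..(T (2 * k + 1)), a u)
      Filter.atTop (nhds (-1))) :
    {γ : ℝ | ¬ ScalarExpDichotomy (fun t => Real.exp (∫ u in (0 : ℝ)..t, a u)) γ} =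
      Set.Icc (-1 : ℝ) 0 := by
  have hincr : ∀ s t, (∫ u in (0 : ℝ)..t, a u) - (∫ u in (0 : ℝ)..s, a u) = ∫ u in s..t, a u :=
    fun s t => intervalIntegral.integral_interval_sub_left (hInt 0 t) (hInt 0 s)
  have hbounds : ∀ s t, 0 ≤ s → s ≤ t → (∫ u in (0 : ℝ)..t, a u) - (∫ u in (0 : ℝ)..s, a u) ∈
      Set.Icc (-1 * (t - s)) (0 * (t - s)) :=
    fun s t hs hst => hincr s t ▸ intervalIntegral_mem_Icc_of_mem_Icc hst (hInt s t)
      fun u hu => hbd u (hs.trans hu.1)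
  have hTnn : ∀ k, 0 ≤ T k := fun k => hT0 ▸ hTmono.monotone k.zero_le
  have hodd : Tendsto (fun k : ℕ => 2 * k - 1) atTop atTop :=
    tendsto_atTop_atTop.2 fun b => ⟨b + 1, fun n hn => by omega⟩
  have h₀ : HasLongIntervalAverage (fun t => ∫ u in (0 : ℝ)..t, a u) 0 :=
    ⟨fun k => T (2 * k - 1), fun k => T (2 * k), fun k => hTnn _,
      (hTdiff.comp hodd).congr' <| (eventually_ge_atTop 1).mono fun k hk => by
        simp only [Function.comp_apply, Nat.sub_add_cancel (by omega : 1 ≤ 2 * k)],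
      by simpa only [hincr] using havg0⟩
  have h₁ : HasLongIntervalAverage (fun t => ∫ u in (0 : ℝ)..t, a u) (-1) :=
    ⟨fun k => T (2 * k), fun k => T (2 * k + 1), fun k => hTnn _,
      hTdiff.comp (tendsto_id.const_mul_atTop' two_pos), by simpa only [hincr] using havg1⟩
  ext γ
  refine ⟨fun hγ => ?_, fun ⟨hγ₁, hγ₀⟩ => h₀.not_scalarExpDichotomy h₁ hγ₁ hγ₀⟩
  by_contra hγ'
  rcases lt_or_ge γ (-1) with hlt | hge
  · exact hγ (scalarExpDichotomy_of_le_increment hlt fun s t hs hst => (hbounds s t hs hst).1)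
  · exact hγ (scalarExpDichotomy_of_increment_le (lt_of_not_ge fun h => hγ' ⟨hge, h⟩)
      fun s t hs hst => (hbounds s t hs hst).2)
end
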